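/- Let b be the map on words defined as follows: given a word w ∈ L_Rect, first substitute each letter via 2 ↦ p, u ↦ q, d ↦ r, 1 ↦ s, and then, if the resulting word contains the letter r, reverse the prefix consisting of all letters strictly before the last occurrence of r. Then b is a bijection from L_Rect to L_Evil, it preserves the length of each word, and the number of occurrences of the letter d in w equals the number of occurrences of the letter r in b(w). -/

import Mathlib

/-- The four-letter alphabet `{1, 2, u, d}`. -/
inductive Ar : Type
  | one : Ar
  | two : Ar
  | u : Ar
  | d : Ar
deriving DecidableEq

/-- The four-letter alphabet `{p, q, r, s}`. -/
inductive Ae : Type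
  | p : Ae
  | q : Ae
  | r : Ae
  | s : Ae
deriving DecidableEq

/-- `L_Rect`: nonempty words over `{1, 2, u, d}` ending in `1` with no factor `21`
and no factor `u1`. -/
def LRect : Set (List Ar) :=
  {w | w ≠ [] ∧ w.getLast? = some Ar.one ∧
    ¬ [Ar.two, Ar.one] <:+: w ∧ ¬ [Ar.u, Ar.one] <:+: w}

/-- `L_Evil`: nonempty words over `{p, q, r, s}` ending in `s`, with no factor `sp`
and no factor `sq`, in which every occurrence of `p` or `q` is followed later in
the word by an occurrence of `r`. -/
def LEvil : Set (List Ae) :=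
  {w | w ≠ [] ∧ w.getLast? = some Ae.s ∧
    ¬ [Ae.s, Ae.p] <:+: w ∧ ¬ [Ae.s, Ae.q] <:+: w ∧
    ∀ i, i < w.length → (w.getD i Ae.s = Ae.p ∨ w.getD i Ae.s = Ae.q) →
      ∃ j, j < w.length ∧ i < j ∧ w.getD j Ae.s = Ae.r}

/-- The letter substitution `2 ↦ p`, `u ↦ q`, `d ↦ r`, `1 ↦ s`. -/
def subst : Ar → Ae
  | Ar.two => Ae.p
  | Ar.u => Ae.q
  | Ar.d => Ae.r
  | Ar.one => Ae.s

/-- The map `b`: substitute the letters via `subst`, and then, if the resulting word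
contains the letter `r`, reverse the prefix consisting of all letters strictly before
the last occurrence of `r`.  (If `r` does not occur in `v := w.map subst`, then
`v.reverse.indexOf Ae.r = v.length`, the cut index `m` is `0` by truncated
subtraction, and the word is left unchanged; if `r` occurs, `m` is the position of
its last occurrence.) -/
def bmap (w : List Ar) : List Ae :=
  let v := w.map subst
  let m := v.length - 1 - v.reverse.idxOf Ae.r
  (v.take m).reverse ++ v.drop m

/-!
The substitution `subst` carries `LRect` onto `substLRect`, the words ending in `s` without
factor `ps` or `qs`, and `b` is this substitution followed by an involution that preserves
lengths and letter counts. So it suffices that the involution maps a word into `LEvil` exactly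
when the word lies in `substLRect`. Write the word as `c ++ r :: t` with `r ∉ t`. In both
languages `t` must be a nonempty block of `s`: in `LEvil` a `p` or `q` in `t` is not followed
by an `r`, in `substLRect` the last letter other than `s` would precede an `s`. What remains is
that `c` avoids `ps` and `qs`, respectively `sp` and `sq` (every `p`, `q` of `c` is followed by
the `r`), and reversing `c` swaps these two conditions. A word without `r` lies in either
language iff it is a nonempty block of `s`.
-/

namespace List

variable {α : Type*}

theorem isChain_iff_forall_not_infix {R : α → α → Prop} {l : List α} :
    l.IsChain R ↔ ∀ a b, ¬ R a b → ¬ [a, b] <:+: l := by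
  rw [isChain_iff_forall_rel_of_append_cons_cons]
  constructor
  · rintro h a b hab ⟨l₁, l₂, rfl⟩
    exact hab (h (l₁ := l₁) (l₂ := l₂) (by simp))
  · intro h a b l₁ l₂ rfl
    by_contra hab
    exact h a b hab ⟨l₁, l₂, by simp⟩

theorem forall_mem_eq_of_isChain {R : α → α → Prop} {a : α} {l : List α}
    (hR : ∀ x ∈ l, R x a → x = a) (hc : l.IsChain R) (hl : l.getLast? = some a) :
    ∀ x ∈ l, x = a := by
  induction l with
  | nil => simp
  | cons x l ih =>
    rcases l with _ | ⟨y, l⟩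
    · simpa using hl
    · have htail : ∀ z ∈ y :: l, z = a :=
        ih (fun z hz => hR z (mem_cons_of_mem x hz)) hc.tail (by simpa using hl)
      have hy : y = a := htail y mem_cons_self
      have hx : x = a := hR x mem_cons_self (hy ▸ hc.rel)
      simpa [hx] using htail

theorem getLast?_eq_some_of_forall_eq {a : α} {l : List α} (hne : l ≠ [])
    (h : ∀ x ∈ l, x = a) : l.getLast? = some a := by
  rw [getLast?_eq_some_getLast hne, h _ (getLast_mem hne)]

theorem getLast?_append_cons_of_ne_nil (c : List α) (a : α) {t : List α} (ht : t ≠ []) :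
    (c ++ a :: t).getLast? = t.getLast? := by
  obtain ⟨x, t, rfl⟩ := exists_cons_of_ne_nil ht
  simp [getLast?_cons]

theorem getD_mem {d : α} {l : List α} {i : ℕ} (hi : i < l.length) : l.getD i d ∈ l := by
  rw [getD_eq_getElem _ _ hi]
  exact getElem_mem hi

theorem eq_append_cons_of_mem_notMem_right [DecidableEq α] {a : α} {l : List α} (h : a ∈ l) :
    ∃ c t, l = c ++ a :: t ∧ a ∉ t := by
  obtain ⟨t, c, hl, ht⟩ := eq_append_cons_of_mem (mem_reverse.2 h)
  exact ⟨c.reverse, t.reverse, by simpa using congrArg reverse hl, by simpa using ht⟩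

section ReversePrefix

variable [DecidableEq α]

def reversePrefixBeforeLast (a : α) (v : List α) : List α :=
  (v.take (v.length - 1 - v.reverse.idxOf a)).reverse ++
    v.drop (v.length - 1 - v.reverse.idxOf a)

theorem length_reversePrefixBeforeLast (a : α) (v : List α) :
    (v.reversePrefixBeforeLast a).length = v.length := by
  simp only [reversePrefixBeforeLast, length_append, length_reverse, length_take, length_drop]
  omega

theorem count_reversePrefixBeforeLast (a b : α) (v : List α) :
    (v.reversePrefixBeforeLast a).count b = v.count b := by
  rw [reversePrefixBeforeLast, count_append, count_reverse, ← count_append, take_append_drop]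

theorem reversePrefixBeforeLast_of_notMem {a : α} {v : List α} (h : a ∉ v) :
    v.reversePrefixBeforeLast a = v := by
  have hidx : v.reverse.idxOf a = v.length := by
    rw [idxOf_eq_length_iff.2 (by simpa using h), length_reverse]
  simp [reversePrefixBeforeLast, hidx]

theorem reversePrefixBeforeLast_append_cons {a : α} {t : List α} (c : List α) (ht : a ∉ t) :
    (c ++ a :: t).reversePrefixBeforeLast a = c.reverse ++ a :: t := by
  have hidx : (c ++ a :: t).reverse.idxOf a = t.length := by
    rw [reverse_append, reverse_cons, append_assoc, idxOf_append_of_notMem (by simpa using ht)]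
    simp
  have hcut : (c ++ a :: t).length - 1 - t.length = c.length := by
    simp only [length_append, length_cons]; omega
  rw [reversePrefixBeforeLast, hidx, hcut, take_left, drop_left]

theorem reversePrefixBeforeLast_involutive (a : α) :
    Function.Involutive (reversePrefixBeforeLast a) := by
  intro v
  by_cases h : a ∈ v
  · obtain ⟨c, t, rfl, ht⟩ := eq_append_cons_of_mem_notMem_right h
    rw [reversePrefixBeforeLast_append_cons c ht, reversePrefixBeforeLast_append_cons _ ht,
      reverse_reverse]
  · rw [reversePrefixBeforeLast_of_notMem h, reversePrefixBeforeLast_of_notMem h]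

end ReversePrefix

section FollowedBy

/-- `d` is only the default of `getD`; the indices involved are in range. -/
def FollowedBy (P : α → Prop) (b d : α) (w : List α) : Prop :=
  ∀ i, i < w.length → P (w.getD i d) → ∃ j, j < w.length ∧ i < j ∧ w.getD j d = b

variable {P : α → Prop} {b d : α}

theorem followedBy_of_forall_not {w : List α} (h : ∀ x ∈ w, ¬ P x) : w.FollowedBy P b d :=
  fun _ hi hP => absurd hP (h _ (getD_mem hi))

theorem followedBy_append_cons (c : List α) {t : List α} (ht : ∀ x ∈ t, ¬ P x) (hb : ¬ P b) :
    (c ++ b :: t).FollowedBy P b d := by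
  intro i hi hP
  refine ⟨c.length, by simp, ?_, by simp⟩
  by_contra! hci
  have hmem : (c ++ b :: t).getD i d ∈ b :: t := by
    rw [getD_append_right _ _ _ _ hci]
    exact getD_mem (by simp at hi ⊢; omega)
  rcases mem_cons.1 hmem with hx | hx
  · exact hb (hx ▸ hP)
  · exact ht _ hx hP

theorem FollowedBy.forall_not_of_notMem {l t : List α} (h : (l ++ t).FollowedBy P b d)
    (hb : b ∉ t) : ∀ x ∈ t, ¬ P x := by
  intro x hx hP
  obtain ⟨k, hk, rfl⟩ := mem_iff_getElem.1 hx
  obtain ⟨j, hj, hkj, hjb⟩ := h (l.length + k) (by simp; omega)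
    (by rwa [getD_append_right _ _ _ _ (by omega), Nat.add_sub_cancel_left,
      getD_eq_getElem _ _ hk])
  rw [getD_append_right _ _ _ _ (by omega)] at hjb
  exact hb (hjb ▸ getD_mem (by simp at hj; omega))

end FollowedBy

end List

def Ae.IsPQ (x : Ae) : Prop := x = Ae.p ∨ x = Ae.q

def Ae.NotPQS (x y : Ae) : Prop := ¬ (x.IsPQ ∧ y = Ae.s)

def substLRect : Set (List Ae) := {v | v.getLast? = some Ae.s ∧ v.IsChain Ae.NotPQS}

theorem subst_bijective : Function.Bijective subst :=
  ⟨(by intro a b h; cases a <;> cases b <;> first | rfl | cases h),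
    by rintro (_ | _ | _ | _); exacts [⟨Ar.two, rfl⟩, ⟨Ar.u, rfl⟩, ⟨Ar.d, rfl⟩, ⟨Ar.one, rfl⟩]⟩

theorem getLast?_map_subst_eq_s_iff (w : List Ar) :
    (w.map subst).getLast? = some Ae.s ↔ w.getLast? = some Ar.one := by
  rw [List.getLast?_map, show Ae.s = subst Ar.one from rfl, ← Option.map_some,
    (Option.map_injective subst_bijective.1).eq_iff]

theorem isChain_map_subst_notPQS_iff (w : List Ar) :
    (w.map subst).IsChain Ae.NotPQS ↔ ¬ [Ar.two, Ar.one] <:+: w ∧ ¬ [Ar.u, Ar.one] <:+: w := by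
  rw [List.isChain_map, List.isChain_iff_forall_not_infix]
  refine ⟨fun h => ⟨h _ _ (by simp [subst, Ae.NotPQS, Ae.IsPQ]),
    h _ _ (by simp [subst, Ae.NotPQS, Ae.IsPQ])⟩, fun ⟨h2, hu⟩ a b hab => ?_⟩
  cases a <;> cases b <;> simp_all [subst, Ae.NotPQS, Ae.IsPQ]

theorem map_subst_mem_substLRect_iff (w : List Ar) :
    w.map subst ∈ substLRect ↔ w ∈ LRect := by
  refine (and_congr (getLast?_map_subst_eq_s_iff w) (isChain_map_subst_notPQS_iff w)).trans
    ⟨fun ⟨hl, h2, hu⟩ => ⟨List.ne_nil_of_mem (List.mem_of_getLast? hl), hl, h2, hu⟩,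
      fun ⟨_, hl, h2, hu⟩ => ⟨hl, h2, hu⟩⟩

theorem isChain_flip_notPQS_iff {v : List Ae} :
    v.IsChain (fun x y => Ae.NotPQS y x) ↔ ¬ [Ae.s, Ae.p] <:+: v ∧ ¬ [Ae.s, Ae.q] <:+: v := by
  rw [List.isChain_iff_forall_not_infix]
  refine ⟨fun h => ⟨h _ _ (by simp [Ae.NotPQS, Ae.IsPQ]), h _ _ (by simp [Ae.NotPQS, Ae.IsPQ])⟩,
    fun ⟨hp, hq⟩ a b hab => ?_⟩
  obtain ⟨rfl | rfl, rfl⟩ : b.IsPQ ∧ a = Ae.s := not_not.1 hab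
  exacts [hp, hq]

theorem mem_LEvil_iff {v : List Ae} : v ∈ LEvil ↔ v.getLast? = some Ae.s ∧
    v.IsChain (fun x y => Ae.NotPQS y x) ∧ v.FollowedBy Ae.IsPQ Ae.r Ae.s := by
  rw [isChain_flip_notPQS_iff]
  exact ⟨fun ⟨_, hl, hp, hq, hf⟩ => ⟨hl, ⟨hp, hq⟩, hf⟩,
    fun ⟨hl, ⟨hp, hq⟩, hf⟩ => ⟨List.ne_nil_of_mem (List.mem_of_getLast? hl), hl, hp, hq, hf⟩⟩

theorem Ae.eq_s_of_ne_r_of_not_isPQ {x : Ae} (hr : x ≠ Ae.r) (hx : ¬ x.IsPQ) : x = Ae.s := by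
  cases x <;> simp_all [Ae.IsPQ]

theorem forall_not_isPQ_r_cons {t : List Ae} (hs : ∀ x ∈ t, x = Ae.s) :
    ∀ x ∈ Ae.r :: t, ¬ x.IsPQ := by
  rintro x (_ | ⟨_, hx⟩)
  · simp [Ae.IsPQ]
  · simp [hs x hx, Ae.IsPQ]

theorem isChain_notPQS_of_forall_not_isPQ {l : List Ae} (h : ∀ x ∈ l, ¬ x.IsPQ) :
    l.IsChain Ae.NotPQS ∧ l.IsChain (fun x y => Ae.NotPQS y x) :=
  ⟨(List.pairwise_of_forall_mem_list (r := Ae.NotPQS) fun x hx _ _ hxs => h x hx hxs.1).isChain,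
    (List.pairwise_of_forall_mem_list (r := fun x y => Ae.NotPQS y x)
      fun _ _ y hy hys => h y hy hys.1).isChain⟩

theorem forall_eq_s_of_isChain_notPQS {l : List Ae} (hr : Ae.r ∉ l)
    (hc : l.IsChain Ae.NotPQS) (hl : l.getLast? = some Ae.s) : ∀ x ∈ l, x = Ae.s :=
  List.forall_mem_eq_of_isChain
    (fun _ hx hxs => Ae.eq_s_of_ne_r_of_not_isPQ (ne_of_mem_of_not_mem hx hr)
      fun hpq => hxs ⟨hpq, rfl⟩) hc hl

theorem forall_eq_s_of_followedBy {l t : List Ae} (hr : Ae.r ∉ t)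
    (h : (l ++ t).FollowedBy Ae.IsPQ Ae.r Ae.s) : ∀ x ∈ t, x = Ae.s :=
  fun x hx => Ae.eq_s_of_ne_r_of_not_isPQ (ne_of_mem_of_not_mem hx hr)
    (h.forall_not_of_notMem hr x hx)

theorem append_r_cons_mem_substLRect_iff (c : List Ae) {t : List Ae} (ht : Ae.r ∉ t) :
    c ++ Ae.r :: t ∈ substLRect ↔ (t ≠ [] ∧ ∀ x ∈ t, x = Ae.s) ∧ c.IsChain Ae.NotPQS := by
  constructor
  · rintro ⟨hl, hc⟩
    have hne : t ≠ [] := by rintro rfl; simp at hl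
    rw [List.getLast?_append_cons_of_ne_nil _ _ hne] at hl
    exact ⟨⟨hne, forall_eq_s_of_isChain_notPQS ht hc.right_of_append.tail hl⟩, hc.left_of_append⟩
  · rintro ⟨⟨hne, hs⟩, hc⟩
    have hrt := forall_not_isPQ_r_cons hs
    refine ⟨?_, hc.append (isChain_notPQS_of_forall_not_isPQ hrt).1 (by simp [Ae.NotPQS])⟩
    rw [List.getLast?_append_cons_of_ne_nil _ _ hne, t.getLast?_eq_some_of_forall_eq hne hs]

theorem append_r_cons_mem_LEvil_iff (c : List Ae) {t : List Ae} (ht : Ae.r ∉ t) :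
    c ++ Ae.r :: t ∈ LEvil ↔
      (t ≠ [] ∧ ∀ x ∈ t, x = Ae.s) ∧ c.IsChain (fun x y => Ae.NotPQS y x) := by
  rw [mem_LEvil_iff]
  constructor
  · rintro ⟨hl, hc, hf⟩
    have hne : t ≠ [] := by rintro rfl; simp at hl
    refine ⟨⟨hne, ?_⟩, hc.left_of_append⟩
    exact forall_eq_s_of_followedBy (l := c ++ [Ae.r]) ht (by simpa using hf)
  · rintro ⟨⟨hne, hs⟩, hc⟩
    have hrt := forall_not_isPQ_r_cons hs
    refine ⟨?_, hc.append (isChain_notPQS_of_forall_not_isPQ hrt).2 (by simp [Ae.NotPQS, Ae.IsPQ]),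
      List.followedBy_append_cons c (fun x hx => hrt x (List.mem_cons_of_mem _ hx))
        (hrt _ List.mem_cons_self)⟩
    rw [List.getLast?_append_cons_of_ne_nil _ _ hne, t.getLast?_eq_some_of_forall_eq hne hs]

theorem mem_substLRect_iff_of_r_notMem {v : List Ae} (hv : Ae.r ∉ v) :
    v ∈ substLRect ↔ v ≠ [] ∧ ∀ x ∈ v, x = Ae.s :=
  ⟨fun ⟨hl, hc⟩ => ⟨List.ne_nil_of_mem (List.mem_of_getLast? hl),
      forall_eq_s_of_isChain_notPQS hv hc hl⟩,
    fun ⟨hne, hs⟩ => ⟨v.getLast?_eq_some_of_forall_eq hne hs,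
      (isChain_notPQS_of_forall_not_isPQ fun x hx => by simp [hs x hx, Ae.IsPQ]).1⟩⟩

theorem mem_LEvil_iff_of_r_notMem {v : List Ae} (hv : Ae.r ∉ v) :
    v ∈ LEvil ↔ v ≠ [] ∧ ∀ x ∈ v, x = Ae.s := by
  rw [mem_LEvil_iff]
  exact ⟨fun ⟨hl, _, hf⟩ => ⟨List.ne_nil_of_mem (List.mem_of_getLast? hl),
      forall_eq_s_of_followedBy (l := []) hv hf⟩,
    fun ⟨hne, hs⟩ =>
      have hpq : ∀ x ∈ v, ¬ x.IsPQ := fun x hx => by simp [hs x hx, Ae.IsPQ]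
      ⟨v.getLast?_eq_some_of_forall_eq hne hs, (isChain_notPQS_of_forall_not_isPQ hpq).2,
        List.followedBy_of_forall_not hpq⟩⟩

theorem reversePrefixBeforeLast_r_mem_LEvil_iff (v : List Ae) :
    v.reversePrefixBeforeLast Ae.r ∈ LEvil ↔ v ∈ substLRect := by
  by_cases hr : Ae.r ∈ v
  · obtain ⟨c, t, rfl, ht⟩ := List.eq_append_cons_of_mem_notMem_right hr
    rw [List.reversePrefixBeforeLast_append_cons c ht, append_r_cons_mem_LEvil_iff _ ht,
      append_r_cons_mem_substLRect_iff _ ht, List.isChain_reverse]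
  · rw [List.reversePrefixBeforeLast_of_notMem hr, mem_LEvil_iff_of_r_notMem hr,
      mem_substLRect_iff_of_r_notMem hr]

/-- `b` is a bijection from `L_Rect` onto `L_Evil` which preserves the length of each
word, and the number of `d`'s in `w` equals the number of `r`'s in `b w`. -/
theorem bmap_bijOn :
    Set.BijOn bmap LRect LEvil ∧
    ∀ w ∈ LRect, (bmap w).length = w.length ∧ w.count Ar.d = (bmap w).count Ae.r := by
  have hbmap : bmap = List.reversePrefixBeforeLast Ae.r ∘ List.map subst := rfl
  have hbij : Function.Bijective bmap := hbmap ▸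
    (List.reversePrefixBeforeLast_involutive Ae.r).bijective.comp
      (List.map_bijective_iff.2 subst_bijective)
  refine ⟨(Equiv.ofBijective bmap hbij).bijOn fun w => ?_, fun w _ => ⟨?_, ?_⟩⟩
  · exact (reversePrefixBeforeLast_r_mem_LEvil_iff _).trans (map_subst_mem_substLRect_iff w)
  · rw [hbmap, Function.comp_apply, List.length_reversePrefixBeforeLast, List.length_map]
  · rw [hbmap, Function.comp_apply, List.count_reversePrefixBeforeLast,
      show Ae.r = subst Ar.d from rfl, List.count_map_of_injective _ _ subst_bijective.1]
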